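/- Let λ > 0 and τ be real, and define for ξ in the upper half-plane ℍ the local plumbing coordinates z(ξ) = exp((πi/λ)·Log((ξ·sinh(λ/2) + cosh(λ/2))/(−ξ·sinh(λ/2) + cosh(λ/2)))) and w(ξ) = exp((πi/λ)·Log((ξ·cosh(λ/2) − sinh(λ/2))/(ξ·cosh(λ/2) + sinh(λ/2)))), where Log is the principal branch of the complex logarithm. Then for every ζ ∈ ℍ, the Möbius image T(λ,τ)·ζ lies in ℍ and z(T(λ,τ)·ζ) · w(ζ) = e^{−π²/λ} · e^{−πiτ/λ}. -/

import Mathlib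

/-!
Both logarithm arguments, `A = zArg λ (T·ζ)` and `B = wArg λ ζ`, are images of points of `ℍ` under
real Möbius maps of positive determinant, so they lie in `ℍ`; and a direct computation shows that
`A * B = -e^{-τ}`. For two points of `ℍ` whose product lies in the closed upper half-plane the
arguments add up to at most `π`, so the principal logarithms add:
`Log A + Log B = Log (-e^{-τ}) = -τ + πi`. Exponentiating `(πi/λ)(-τ + πi)` gives the claim.
-/

open Matrix

/-- `T(λ,τ) = [[cosh(τ/2)·coth(λ/2), −sinh(τ/2)], [−sinh(τ/2), cosh(τ/2)·tanh(λ/2)]]` -/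
noncomputable def Tmat (l τ : ℂ) : Matrix (Fin 2) (Fin 2) ℂ :=
  !![Complex.cosh (τ/2) * (Complex.cosh (l/2) / Complex.sinh (l/2)), -Complex.sinh (τ/2);
     -Complex.sinh (τ/2), Complex.cosh (τ/2) * (Complex.sinh (l/2) / Complex.cosh (l/2))]

/-- The Möbius action of a 2×2 matrix on ℂ. -/
noncomputable def moebius (M : Matrix (Fin 2) (Fin 2) ℂ) (z : ℂ) : ℂ :=
  (M 0 0 * z + M 0 1) / (M 1 0 * z + M 1 1)

/-- The local plumbing coordinate
`z(ξ) = exp((πi/λ)·Log((ξ·sinh(λ/2) + cosh(λ/2))/(−ξ·sinh(λ/2) + cosh(λ/2))))`. -/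
noncomputable def zCoord (l : ℝ) (ξ : ℂ) : ℂ :=
  Complex.exp ((Real.pi * Complex.I / l) *
    Complex.log ((ξ * Complex.sinh (l/2) + Complex.cosh (l/2)) /
      (-ξ * Complex.sinh (l/2) + Complex.cosh (l/2))))

/-- The local plumbing coordinate
`w(ξ) = exp((πi/λ)·Log((ξ·cosh(λ/2) − sinh(λ/2))/(ξ·cosh(λ/2) + sinh(λ/2))))`. -/
noncomputable def wCoord (l : ℝ) (ξ : ℂ) : ℂ :=
  Complex.exp ((Real.pi * Complex.I / l) *
    Complex.log ((ξ * Complex.cosh (l/2) - Complex.sinh (l/2)) /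
      (ξ * Complex.cosh (l/2) + Complex.sinh (l/2))))

open scoped Real

namespace Complex

lemma ne_zero_of_im_pos {z : ℂ} (hz : 0 < z.im) : z ≠ 0 := fun h ↦ by simp [h] at hz

lemma im_mul_eq_norm_mul_norm_mul_sin_arg_add (a b : ℂ) :
    (a * b).im = ‖a‖ * ‖b‖ * Real.sin (arg a + arg b) := by
  rw [Real.sin_add, mul_im, ← norm_mul_cos_arg a, ← norm_mul_sin_arg a, ← norm_mul_cos_arg b,
    ← norm_mul_sin_arg b]
  ring

lemma arg_add_arg_le_pi_of_im_pos {a b : ℂ} (ha : 0 < a.im) (hb : 0 < b.im)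
    (hab : 0 ≤ (a * b).im) : arg a + arg b ≤ π := by
  by_contra! h
  have ha' := arg_lt_pi_iff.2 (Or.inr ha.ne')
  have hb' := arg_lt_pi_iff.2 (Or.inr hb.ne')
  have hsin : Real.sin (arg a + arg b) < 0 := by
    rw [← neg_pos, ← Real.sin_sub_pi]
    exact Real.sin_pos_of_pos_of_lt_pi (by linarith) (by linarith)
  have : (a * b).im < 0 := by
    rw [im_mul_eq_norm_mul_norm_mul_sin_arg_add]
    exact mul_neg_of_pos_of_neg
      (mul_pos (norm_pos_iff.2 (ne_zero_of_im_pos ha)) (norm_pos_iff.2 (ne_zero_of_im_pos hb))) hsin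
  linarith

lemma log_mul_of_im_pos {a b : ℂ} (ha : 0 < a.im) (hb : 0 < b.im) (hab : 0 ≤ (a * b).im) :
    log (a * b) = log a + log b := by
  refine log_mul (ne_zero_of_im_pos ha) (ne_zero_of_im_pos hb)
    ⟨?_, arg_add_arg_le_pi_of_im_pos ha hb hab⟩
  linarith [arg_nonneg_iff.2 ha.le, arg_nonneg_iff.2 hb.le, Real.pi_pos]

lemma ofReal_mul_add_ofReal_ne_zero {c d : ℝ} {z : ℂ} (hz : 0 < z.im) (hcd : c ≠ 0 ∨ d ≠ 0) :
    (c : ℂ) * z + d ≠ 0 := by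
  intro h
  have hc : c = 0 := by simpa [hz.ne'] using congrArg im h
  have hd : d = 0 := by simpa [hc] using congrArg re h
  tauto

lemma im_ofReal_moebius (a b c d : ℝ) (z : ℂ) :
    ((a * z + b) / (c * z + d)).im = (a * d - b * c) * z.im / normSq (c * z + d) := by
  rw [div_im, div_sub_div_same]
  congr 1
  simp only [add_re, add_im, mul_re, mul_im, ofReal_re, ofReal_im]
  ring

lemma im_ofReal_moebius_pos {a b c d : ℝ} (hdet : 0 < a * d - b * c) {z : ℂ} (hz : 0 < z.im) :
    0 < ((a * z + b) / (c * z + d)).im := by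
  have hcd : c ≠ 0 ∨ d ≠ 0 := by
    by_contra! h
    simp [h.1, h.2] at hdet
  rw [im_ofReal_moebius]
  exact div_pos (mul_pos hdet hz) (normSq_pos.2 (ofReal_mul_add_ofReal_ne_zero hz hcd))

end Complex

open Complex

/-- The arguments of `Complex.log` in `zCoord` and `wCoord`, which are therefore
`exp (π * I / l * log (zArg l ξ))` and `exp (π * I / l * log (wArg l ξ))` by definition. -/
noncomputable def zArg (l ξ : ℂ) : ℂ :=
  (ξ * sinh (l/2) + cosh (l/2)) / (-ξ * sinh (l/2) + cosh (l/2))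

noncomputable def wArg (l ξ : ℂ) : ℂ :=
  (ξ * cosh (l/2) - sinh (l/2)) / (ξ * cosh (l/2) + sinh (l/2))

lemma zArg_moebius_Tmat {l τ ζ : ℂ} (hs : sinh (l/2) ≠ 0) (hc : cosh (l/2) ≠ 0)
    (hT : -sinh (τ/2) * ζ + cosh (τ/2) * (sinh (l/2) / cosh (l/2)) ≠ 0)
    (hminus : sinh (l/2) - ζ * cosh (l/2) ≠ 0) : zArg l (moebius (Tmat l τ) ζ) =
      exp (-τ) * ((ζ * cosh (l/2) + sinh (l/2)) / (sinh (l/2) - ζ * cosh (l/2))) := by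
  have hexp : exp (-τ) = (cosh (τ/2) - sinh (τ/2)) ^ 2 := by
    rw [cosh_sub_sinh, ← exp_nat_mul]; ring_nf
  have hCS := cosh_sq_sub_sinh_sq (τ/2)
  have hCS' : cosh (τ/2) + sinh (τ/2) ≠ 0 := by rw [cosh_add_sinh]; exact exp_ne_zero _
  set s := sinh (l/2)
  set c := cosh (l/2)
  set S := sinh (τ/2)
  set C := cosh (τ/2)
  set ξ := moebius (Tmat l τ) ζ
  have hξ : ξ * (-S * ζ + C * (s / c)) = C * (c / s) * ζ + -S := div_mul_cancel₀ _ hT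
  set D := C * s - S * ζ * c
  have hD : D ≠ 0 := by
    contrapose! hT
    field_simp
    linear_combination hT
  have hξD : ξ * s * D = (C * c * ζ - S * s) * c := by
    field_simp at hξ
    linear_combination hξ
  have hnum : ξ * s + c = c * (C - S) * (ζ * c + s) / D := by
    rw [eq_div_iff hD]; linear_combination hξD
  have hden : c - ξ * s = c * (C + S) * (s - ζ * c) / D := by
    rw [eq_div_iff hD]; linear_combination -hξD
  rw [zArg, neg_mul, neg_add_eq_sub, hnum, hden, div_div_div_cancel_right₀ hD, hexp,
    mul_div_assoc', div_eq_div_iff (by simp [*]) hminus]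
  linear_combination -c * (C - S) * (ζ * c + s) * (s - ζ * c) * hCS

lemma zArg_moebius_Tmat_mul_wArg {l τ ζ : ℂ} (hs : sinh (l/2) ≠ 0) (hc : cosh (l/2) ≠ 0)
    (hT : -sinh (τ/2) * ζ + cosh (τ/2) * (sinh (l/2) / cosh (l/2)) ≠ 0)
    (hplus : ζ * cosh (l/2) + sinh (l/2) ≠ 0) (hminus : sinh (l/2) - ζ * cosh (l/2) ≠ 0) :
    zArg l (moebius (Tmat l τ) ζ) * wArg l ζ = -exp (-τ) := by
  rw [zArg_moebius_Tmat hs hc hT hminus, wArg, ← neg_sub (sinh _), mul_assoc, div_mul_div_comm,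
    mul_neg, neg_div, mul_comm (ζ * _ + _), div_self (mul_ne_zero hminus hplus), mul_neg, mul_one]

lemma moebius_Tmat_ofReal (l τ : ℝ) (ζ : ℂ) :
    moebius (Tmat l τ) ζ =
      (((Real.cosh (τ/2) * (Real.cosh (l/2) / Real.sinh (l/2)) : ℝ) : ℂ) * ζ
          + ((-Real.sinh (τ/2) : ℝ) : ℂ)) /
        (((-Real.sinh (τ/2) : ℝ) : ℂ) * ζ
          + ((Real.cosh (τ/2) * (Real.sinh (l/2) / Real.cosh (l/2)) : ℝ) : ℂ)) := by
  simp [moebius, Tmat, ofReal_sinh, ofReal_cosh]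

lemma zArg_ofReal (l : ℝ) (ξ : ℂ) :
    zArg l ξ = ((Real.sinh (l/2) : ℝ) * ξ + (Real.cosh (l/2) : ℝ)) /
      (((-Real.sinh (l/2) : ℝ) : ℂ) * ξ + (Real.cosh (l/2) : ℝ)) := by
  simp only [zArg, ofReal_neg, ofReal_sinh, ofReal_cosh, ofReal_div, ofReal_ofNat]
  ring_nf

lemma wArg_ofReal (l : ℝ) (ξ : ℂ) :
    wArg l ξ = ((Real.cosh (l/2) : ℝ) * ξ + ((-Real.sinh (l/2) : ℝ) : ℂ)) /
      ((Real.cosh (l/2) : ℝ) * ξ + (Real.sinh (l/2) : ℝ)) := by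
  simp only [wArg, ofReal_neg, ofReal_sinh, ofReal_cosh, ofReal_div, ofReal_ofNat]
  ring_nf

lemma im_moebius_Tmat_pos {l : ℝ} (τ : ℝ) (hl : l ≠ 0) {ζ : ℂ} (hζ : 0 < ζ.im) :
    0 < (moebius (Tmat l τ) ζ).im := by
  have hs : Real.sinh (l/2) ≠ 0 := by simpa using hl
  have hc := (Real.cosh_pos (l/2)).ne'
  have hdet : Real.cosh (τ/2) * (Real.cosh (l/2) / Real.sinh (l/2)) *
      (Real.cosh (τ/2) * (Real.sinh (l/2) / Real.cosh (l/2)))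
        - -Real.sinh (τ/2) * -Real.sinh (τ/2) = 1 := by
    field_simp
    linear_combination Real.cosh_sq_sub_sinh_sq (τ/2)
  rw [moebius_Tmat_ofReal]
  exact im_ofReal_moebius_pos (hdet ▸ one_pos) hζ

lemma im_zArg_pos {l : ℝ} (hl : 0 < l) {ξ : ℂ} (hξ : 0 < ξ.im) : 0 < (zArg l ξ).im := by
  rw [zArg_ofReal]
  refine im_ofReal_moebius_pos ?_ hξ
  have := Real.sinh_pos_iff.2 (half_pos hl)
  nlinarith [Real.cosh_pos (l/2)]

lemma im_wArg_pos {l : ℝ} (hl : 0 < l) {ξ : ℂ} (hξ : 0 < ξ.im) : 0 < (wArg l ξ).im := by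
  rw [wArg_ofReal]
  refine im_ofReal_moebius_pos ?_ hξ
  have := Real.sinh_pos_iff.2 (half_pos hl)
  nlinarith [Real.cosh_pos (l/2)]

lemma zArg_moebius_Tmat_mul_wArg_of_im_pos {l : ℝ} (τ : ℝ) (hl : l ≠ 0) {ζ : ℂ} (hζ : 0 < ζ.im) :
    zArg l (moebius (Tmat l τ) ζ) * wArg l ζ = -exp (-τ) := by
  have hs : Real.sinh (l/2) ≠ 0 := by simpa using hl
  have hc := (Real.cosh_pos (l/2)).ne'
  have hT := ofReal_mul_add_ofReal_ne_zero hζ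
    (c := -Real.sinh (τ/2)) (d := Real.cosh (τ/2) * (Real.sinh (l/2) / Real.cosh (l/2)))
    (Or.inr (mul_ne_zero (Real.cosh_pos _).ne' (div_ne_zero hs hc)))
  have hplus := ofReal_mul_add_ofReal_ne_zero hζ (c := Real.cosh (l/2)) (d := Real.sinh (l/2))
    (Or.inl hc)
  have hminus := ofReal_mul_add_ofReal_ne_zero hζ (c := -Real.cosh (l/2)) (d := Real.sinh (l/2))
    (Or.inl (neg_ne_zero.2 hc))
  push_cast [ofReal_sinh, ofReal_cosh] at hT hplus hminus
  refine zArg_moebius_Tmat_mul_wArg (by exact_mod_cast hs) (by exact_mod_cast hc) hT ?_ ?_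
  · rwa [mul_comm]
  · rwa [neg_mul, neg_add_eq_sub, mul_comm] at hminus

theorem plumbing_parameter (l τ : ℝ) (hl : 0 < l) (ζ : ℂ) (hζ : 0 < ζ.im) :
    0 < (moebius (Tmat l τ) ζ).im ∧
    zCoord l (moebius (Tmat l τ) ζ) * wCoord l ζ =
      Complex.exp (-(Real.pi ^ 2) / l) *
        Complex.exp (-(Real.pi * Complex.I * τ) / l) := by
  set ξ := moebius (Tmat l τ) ζ
  have hξ : 0 < ξ.im := im_moebius_Tmat_pos τ hl.ne' hζ
  refine ⟨hξ, ?_⟩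
  have hprod : zArg l ξ * wArg l ζ = exp (-τ + π * I) := by
    rw [zArg_moebius_Tmat_mul_wArg_of_im_pos τ hl.ne' hζ, exp_add, exp_pi_mul_I, mul_neg_one]
  have hlog : log (zArg l ξ) + log (wArg l ζ) = -τ + π * I := by
    rw [← log_mul_of_im_pos (im_zArg_pos hl hξ) (im_wArg_pos hl hζ) (by simp [hprod, exp_im]),
      hprod, log_exp (by simp [Real.pi_pos]) (by simp)]
  change exp (π * I / l * log (zArg l ξ)) * exp (π * I / l * log (wArg l ζ)) = _
  rw [← exp_add, ← mul_add, hlog, ← exp_add]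
  congr 1
  have hl' : (l : ℂ) ≠ 0 := ofReal_ne_zero.2 hl.ne'
  field_simp
  linear_combination (π : ℂ) * I_sq
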